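/- arXiv:1808.06669 — 2 statements merged into one kernel-verified Lean document; each statement's English description precedes it below -/
import Mathlib

section
/- Suppose L is a hermitian monic pencil with coefficients A₁,…,A_g ∈ Matrix (Fin d) (Fin d) ℂ and there exist matrices D, P₀, C₁,…,C_m with P₀ positive semidefinite such that the affine linear matrix-valued identity Re(D·L̃) = P₀ + ∑ₖ Cₖᴴ L Cₖ holds as polynomials, where L̃ is an affine linear pencil, and ker P₀ ∩ ⋂ₖ ker Cₖ = {0}. Then for every g-tuple X of n×n matrices with L(X) positive definite, the matrix L̃(X) has trivial kernel (full column rank). -/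
/-! If `L̃(X) v = 0` then also `(D ⊗ 1) L̃(X) v = 0`, so the quadratic form of
`Re((D ⊗ 1) L̃(X))` vanishes at `v`. Evaluating the certificate at `X` rewrites this real part as
`P₀ ⊗ 1 + ∑ₖ (Cₖ ⊗ 1)ᴴ L(X) (Cₖ ⊗ 1)`, a sum of positive semidefinite matrices, so every summand
has vanishing quadratic form at `v`. This forces `(P₀ ⊗ 1) v = 0` and, since `L(X) ≻ 0`,
`(Cₖ ⊗ 1) v = 0`; read column by column, the kernel condition then gives `v = 0`. -/

open Matrix Kronecker ComplexOrder

namespace Matrix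

section Kronecker

variable {R ι κ n J : Type*}

theorem neg_kronecker [NonUnitalNonAssocRing R] (A : Matrix ι κ R) (B : Matrix n n R) :
    (-A) ⊗ₖ B = -(A ⊗ₖ B) := by
  ext ⟨i, a⟩ ⟨k, b⟩
  simp

theorem kronecker_one_mulVec_apply [NonAssocSemiring R] [Fintype κ] [Fintype n] [DecidableEq n]
    (M : Matrix ι κ R) (v : κ × n → R) (i : ι) (t : n) :
    (M ⊗ₖ (1 : Matrix n n R) *ᵥ v) (i, t) = (M *ᵥ fun j => v (j, t)) i := by
  simp [mulVec, dotProduct, Fintype.sum_prod_type, one_apply]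

theorem kronecker_one_mulVec_eq_zero_iff [NonAssocSemiring R] [Fintype κ] [Fintype n]
    [DecidableEq n] (M : Matrix ι κ R) (v : κ × n → R) :
    M ⊗ₖ (1 : Matrix n n R) *ᵥ v = 0 ↔ ∀ t, (M *ᵥ fun j => v (j, t)) = 0 := by
  simp only [funext_iff, Prod.forall, kronecker_one_mulVec_apply, Pi.zero_apply]
  exact forall_comm

end Kronecker

section PencilEval

variable {R ι κ μ n J K : Type*} [CommSemiring R] [StarRing R] [DecidableEq n] [Fintype J]

/-- The affine pencil `C + ∑ⱼ Aⱼ xⱼ + ∑ⱼ Bⱼ xⱼᴴ` evaluated at the tuple `X` by tensor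
substitution `xⱼ ↦ Xⱼ`. -/
def pencilEval (C : Matrix ι κ R) (A B : J → Matrix ι κ R) (X : J → Matrix n n R) :
    Matrix (ι × n) (κ × n) R :=
  C ⊗ₖ 1 + ∑ j, A j ⊗ₖ X j + ∑ j, B j ⊗ₖ (X j)ᴴ

variable (X : J → Matrix n n R)

@[simp]
theorem pencilEval_zero : pencilEval (0 : Matrix ι κ R) 0 0 X = 0 := by
  simp [pencilEval]

theorem pencilEval_add (C C' : Matrix ι κ R) (A A' B B' : J → Matrix ι κ R) :
    pencilEval (C + C') (A + A') (B + B') X = pencilEval C A B X + pencilEval C' A' B' X := by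
  simp only [pencilEval, Pi.add_apply, add_kronecker, Finset.sum_add_distrib]
  abel

theorem pencilEval_smul (r : R) (C : Matrix ι κ R) (A B : J → Matrix ι κ R) :
    pencilEval (r • C) (r • A) (r • B) X = r • pencilEval C A B X := by
  simp only [pencilEval, Pi.smul_apply, smul_kronecker, smul_add, Finset.smul_sum]

theorem pencilEval_sum (s : Finset K) (C : K → Matrix ι κ R) (A B : K → J → Matrix ι κ R) :
    pencilEval (∑ k ∈ s, C k) (∑ k ∈ s, A k) (∑ k ∈ s, B k) X
      = ∑ k ∈ s, pencilEval (C k) (A k) (B k) X := by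
  classical
  induction s using Finset.induction_on with
  | empty => simp
  | insert k s hk ih => simp only [Finset.sum_insert hk, pencilEval_add, ih]

theorem pencilEval_zero_zero (C : Matrix ι κ R) :
    pencilEval C (0 : J → Matrix ι κ R) 0 X = C ⊗ₖ 1 := by
  simp [pencilEval]

theorem conjTranspose_pencilEval (C : Matrix ι κ R) (A B : J → Matrix ι κ R) :
    (pencilEval C A B X)ᴴ = pencilEval Cᴴ (fun j => (B j)ᴴ) (fun j => (A j)ᴴ) X := by
  simp only [pencilEval, conjTranspose_add, conjTranspose_sum, conjTranspose_kronecker,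
    conjTranspose_one, conjTranspose_conjTranspose]
  exact add_right_comm _ _ _

variable [Fintype n]

theorem kronecker_one_mul_pencilEval [Fintype ι] (D : Matrix μ ι R) (C : Matrix ι κ R)
    (A B : J → Matrix ι κ R) :
    D ⊗ₖ (1 : Matrix n n R) * pencilEval C A B X
      = pencilEval (D * C) (fun j => D * A j) (fun j => D * B j) X := by
  simp only [pencilEval, Matrix.mul_add, Matrix.mul_sum, ← mul_kronecker_mul, Matrix.one_mul]

theorem pencilEval_mul_kronecker_one [Fintype κ] (C : Matrix ι κ R) (A B : J → Matrix ι κ R)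
    (E : Matrix κ μ R) :
    pencilEval C A B X * E ⊗ₖ (1 : Matrix n n R)
      = pencilEval (C * E) (fun j => A j * E) (fun j => B j * E) X := by
  simp only [pencilEval, Matrix.add_mul, Matrix.sum_mul, ← mul_kronecker_mul, Matrix.mul_one]

end PencilEval

section MonicPencil

variable {R ι κ m n J K : Type*} [CommRing R] [StarRing R] [DecidableEq n] [Fintype J]
  (X : J → Matrix n n R)

theorem pencilEval_one_neg [DecidableEq m] (A : J → Matrix m m R) :
    pencilEval 1 (-A) (fun j => -(A j)ᴴ) X
      = 1 - ∑ j, A j ⊗ₖ X j - ∑ j, (A j)ᴴ ⊗ₖ (X j)ᴴ := by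
  simp only [pencilEval, one_kronecker_one, Pi.neg_apply, neg_kronecker, Finset.sum_neg_distrib,
    ← sub_eq_add_neg]

theorem conjTranspose_kronecker_one_mul_pencilEval_one_neg_mul [Fintype m] [Fintype n]
    [DecidableEq m] (A : J → Matrix m m R) (B : Matrix m κ R) :
    (B ⊗ₖ (1 : Matrix n n R))ᴴ * pencilEval (1 : Matrix m m R) (-A) (fun j => -(A j)ᴴ) X
        * B ⊗ₖ (1 : Matrix n n R)
      = pencilEval (Bᴴ * B) (fun j => -(Bᴴ * A j * B)) (fun j => -(Bᴴ * (A j)ᴴ * B)) X := by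
  rw [conjTranspose_kronecker, conjTranspose_one, kronecker_one_mul_pencilEval,
    pencilEval_mul_kronecker_one]
  simp only [Pi.neg_apply, Matrix.mul_one, Matrix.mul_neg, Matrix.neg_mul]

theorem smul_add_conjTranspose_eq_of_certificate [Fintype ι] [Fintype κ] [Fintype m] [Fintype n]
    [Fintype K] [DecidableEq m] (A : J → Matrix m m R) (C₀ : Matrix ι κ R)
    (A' B' : J → Matrix ι κ R) (D : Matrix κ ι R) (P₀ : Matrix κ κ R) (C : K → Matrix m κ R)
    (r : R) (hconst : r • (D * C₀ + (D * C₀)ᴴ) = P₀ + ∑ k, (C k)ᴴ * C k)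
    (hx : ∀ j, r • (D * A' j + (B' j)ᴴ * Dᴴ) = -∑ k, (C k)ᴴ * A j * C k)
    (hxs : ∀ j, r • (D * B' j + (A' j)ᴴ * Dᴴ) = -∑ k, (C k)ᴴ * (A j)ᴴ * C k) :
    r • (D ⊗ₖ (1 : Matrix n n R) * pencilEval C₀ A' B' X
        + (D ⊗ₖ (1 : Matrix n n R) * pencilEval C₀ A' B' X)ᴴ)
      = P₀ ⊗ₖ (1 : Matrix n n R) + ∑ k, (C k ⊗ₖ (1 : Matrix n n R))ᴴ
          * pencilEval (1 : Matrix m m R) (-A) (fun j => -(A j)ᴴ) X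
          * C k ⊗ₖ (1 : Matrix n n R) := by
  have hA : r • ((fun j => D * A' j) + fun j => (D * B' j)ᴴ)
      = ∑ k, fun j => -((C k)ᴴ * A j * C k) := by
    ext j : 1
    simpa [conjTranspose_mul, Finset.sum_apply] using hx j
  have hB : r • ((fun j => D * B' j) + fun j => (D * A' j)ᴴ)
      = ∑ k, fun j => -((C k)ᴴ * (A j)ᴴ * C k) := by
    ext j : 1
    simpa [conjTranspose_mul, Finset.sum_apply] using hxs j
  rw [kronecker_one_mul_pencilEval, conjTranspose_pencilEval, ← pencilEval_add,
    ← pencilEval_smul, hconst, hA, hB]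
  simp only [conjTranspose_kronecker_one_mul_pencilEval_one_neg_mul, ← pencilEval_sum,
    ← pencilEval_zero_zero X P₀, ← pencilEval_add, zero_add]

end MonicPencil

section Positivity

theorem star_dotProduct_smul_add_conjTranspose_mulVec_eq_zero {R n : Type*} [CommSemiring R]
    [StarRing R] [Fintype n] {M : Matrix n n R} {v : n → R} (r : R) (hv : M *ᵥ v = 0) :
    star v ⬝ᵥ (r • (M + Mᴴ)) *ᵥ v = 0 := by
  rw [smul_mulVec, add_mulVec, dotProduct_smul, dotProduct_add, dotProduct_mulVec (star v) Mᴴ,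
    ← star_mulVec, hv]
  simp

variable {𝕜 m n K : Type*} [RCLike 𝕜] [Fintype m] [Fintype n]

theorem PosSemidef.mulVec_eq_zero_of_dotProduct_add_sum_mulVec_eq_zero [Fintype K]
    {P : Matrix n n 𝕜} (hP : P.PosSemidef) {L : Matrix m m 𝕜} (hL : L.PosDef)
    (C : K → Matrix m n 𝕜) {v : n → 𝕜}
    (h : star v ⬝ᵥ (P + ∑ k, (C k)ᴴ * L * C k) *ᵥ v = 0) :
    P *ᵥ v = 0 ∧ ∀ k, C k *ᵥ v = 0 := by
  have hQ (k : K) : 0 ≤ star v ⬝ᵥ ((C k)ᴴ * L * C k) *ᵥ v :=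
    (hL.posSemidef.conjTranspose_mul_mul_same (C k)).dotProduct_mulVec_nonneg v
  rw [add_mulVec, dotProduct_add, sum_mulVec, dotProduct_sum] at h
  obtain ⟨hPv, hQv⟩ := (add_eq_zero_iff_of_nonneg (hP.dotProduct_mulVec_nonneg v)
    (Finset.sum_nonneg fun k _ => hQ k)).1 h
  refine ⟨(hP.dotProduct_mulVec_zero_iff v).1 hPv, fun k => ?_⟩
  have hk := (Finset.sum_eq_zero_iff_of_nonneg fun k _ => hQ k).1 hQv k (Finset.mem_univ k)
  rw [← mulVec_mulVec, ← mulVec_mulVec, dotProduct_mulVec, ← star_mulVec] at hk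
  by_contra hne
  exact (hL.dotProduct_mulVec_pos hne).ne' hk

end Positivity

end Matrix

theorem stmt_6_general (d δ ε g : ℕ)
    -- coefficients of the hermitian monic pencil L of size d
    (A : Fin g → Matrix (Fin d) (Fin d) ℂ)
    -- coefficients of the δ×ε affine linear pencil L̃ = C̃ + ∑ⱼ Ãⱼ xⱼ + ∑ⱼ B̃ⱼ xⱼᴴ
    (Ct : Matrix (Fin δ) (Fin ε) ℂ)
    (At Bt : Fin g → Matrix (Fin δ) (Fin ε) ℂ)
    -- the data of the certificate
    (m : ℕ) (D : Matrix (Fin ε) (Fin δ) ℂ) (P₀ : Matrix (Fin ε) (Fin ε) ℂ)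
    (C : Fin m → Matrix (Fin d) (Fin ε) ℂ)
    (hP₀ : P₀.PosSemidef)
    -- the identity Re(D·L̃) = P₀ + ∑ₖ Cₖᴴ L Cₖ, as an equality of matrix coefficients:
    -- the constant coefficient
    (hconst : (2 : ℂ)⁻¹ • (D * Ct + (D * Ct)ᴴ) = P₀ + ∑ k, (C k)ᴴ * (C k))
    -- the coefficient of xⱼ
    (hx : ∀ j, (2 : ℂ)⁻¹ • (D * At j + (Bt j)ᴴ * Dᴴ) = -∑ k, (C k)ᴴ * A j * (C k))
    -- the coefficient of xⱼᴴ
    (hxs : ∀ j, (2 : ℂ)⁻¹ • (D * Bt j + (At j)ᴴ * Dᴴ) = -∑ k, (C k)ᴴ * (A j)ᴴ * (C k))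
    -- the kernel condition ker P₀ ∩ ⋂ₖ ker Cₖ = {0}
    (hker : ∀ x : Fin ε → ℂ, P₀.mulVec x = 0 → (∀ k, (C k).mulVec x = 0) → x = 0) :
    -- conclusion: for every X with L(X) ≻ 0, L̃(X) has trivial kernel
    ∀ (n : ℕ) (X : Fin g → Matrix (Fin n) (Fin n) ℂ),
      ((1 : Matrix (Fin d × Fin n) (Fin d × Fin n) ℂ)
        - ∑ j, A j ⊗ₖ X j - ∑ j, (A j)ᴴ ⊗ₖ (X j)ᴴ).PosDef →
      ∀ v : Fin ε × Fin n → ℂ,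
        (Ct ⊗ₖ (1 : Matrix (Fin n) (Fin n) ℂ)
          + ∑ j, At j ⊗ₖ X j + ∑ j, Bt j ⊗ₖ (X j)ᴴ).mulVec v = 0 → v = 0 := by
  intro n X hL v hv
  rw [← pencilEval_one_neg] at hL
  have hDv : (D ⊗ₖ (1 : Matrix (Fin n) (Fin n) ℂ) * pencilEval Ct At Bt X) *ᵥ v = 0 := by
    rw [← mulVec_mulVec, pencilEval, hv, mulVec_zero]
  have hre := star_dotProduct_smul_add_conjTranspose_mulVec_eq_zero (2 : ℂ)⁻¹ hDv
  rw [smul_add_conjTranspose_eq_of_certificate X A Ct At Bt D P₀ C _ hconst hx hxs] at hre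
  obtain ⟨hP₀v, hCv⟩ :=
    (hP₀.kronecker PosSemidef.one).mulVec_eq_zero_of_dotProduct_add_sum_mulVec_eq_zero hL _ hre
  simp only [kronecker_one_mulVec_eq_zero_iff] at hP₀v hCv
  ext ⟨i, t⟩
  exact congrFun (hker _ (hP₀v t) fun k => hCv k t) i

theorem stmt_6 (d δ ε g : ℕ) (hδε : ε ≤ δ)
    -- coefficients of the hermitian monic pencil L of size d
    (A : Fin g → Matrix (Fin d) (Fin d) ℂ)
    -- coefficients of the δ×ε affine linear pencil L̃ = C̃ + ∑ⱼ Ãⱼ xⱼ + ∑ⱼ B̃ⱼ xⱼᴴ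
    (Ct : Matrix (Fin δ) (Fin ε) ℂ)
    (At Bt : Fin g → Matrix (Fin δ) (Fin ε) ℂ)
    -- the data of the certificate
    (m : ℕ) (D : Matrix (Fin ε) (Fin δ) ℂ) (P₀ : Matrix (Fin ε) (Fin ε) ℂ)
    (C : Fin m → Matrix (Fin d) (Fin ε) ℂ)
    (hP₀ : P₀.PosSemidef)
    -- the identity Re(D·L̃) = P₀ + ∑ₖ Cₖᴴ L Cₖ, as an equality of matrix coefficients:
    -- the constant coefficient
    (hconst : (2 : ℂ)⁻¹ • (D * Ct + (D * Ct)ᴴ) = P₀ + ∑ k, (C k)ᴴ * (C k))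
    -- the coefficient of xⱼ
    (hx : ∀ j, (2 : ℂ)⁻¹ • (D * At j + (Bt j)ᴴ * Dᴴ) = -∑ k, (C k)ᴴ * A j * (C k))
    -- the coefficient of xⱼᴴ
    (hxs : ∀ j, (2 : ℂ)⁻¹ • (D * Bt j + (At j)ᴴ * Dᴴ) = -∑ k, (C k)ᴴ * (A j)ᴴ * (C k))
    -- the kernel condition ker P₀ ∩ ⋂ₖ ker Cₖ = {0}
    (hker : ∀ x : Fin ε → ℂ, P₀.mulVec x = 0 → (∀ k, (C k).mulVec x = 0) → x = 0) :
    -- conclusion: for every X with L(X) ≻ 0, L̃(X) has trivial kernel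
    ∀ (n : ℕ) (X : Fin g → Matrix (Fin n) (Fin n) ℂ),
      ((1 : Matrix (Fin d × Fin n) (Fin d × Fin n) ℂ)
        - ∑ j, A j ⊗ₖ X j - ∑ j, (A j)ᴴ ⊗ₖ (X j)ᴴ).PosDef →
      ∀ v : Fin ε × Fin n → ℂ,
        (Ct ⊗ₖ (1 : Matrix (Fin n) (Fin n) ℂ)
          + ∑ j, At j ⊗ₖ X j + ∑ j, Bt j ⊗ₖ (X j)ᴴ).mulVec v = 0 → v = 0 :=
  stmt_6_general d δ ε g A Ct At Bt m D P₀ C hP₀ hconst hx hxs hker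
end

section
/- Let q be a noncommutative polynomial in the analytic variables x₁,…,x_g only (an element of the free algebra on x), and suppose q + q* is written as α + ℓ − ∑ₖ ℓₖ* ℓₖ where α ∈ ℂ, ℓ and each ℓₖ are homogeneous-degree-≤-1 elements of the free *-algebra ℂ⟨x, x*⟩. If q + q* contains no mixed words (no word containing both a starred and an unstarred letter), then all ℓₖ with nonzero degree-one part in both x and x* components must vanish; in particular, if every ℓₖ = cₖ + ∑ⱼ aₖⱼ xⱼ + ∑ⱼ bₖⱼ xⱼ* and the expression equals q + q*, then for each k and each j, aₖⱼ · conj(aₖⱼ) terms produce the coefficient of xⱼ* xⱼ, forcing ∑ₖ |aₖⱼ|² = 0 and ∑ₖ |bₖⱼ|² = 0, hence each ℓₖ is constant. -/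
open scoped ComplexConjugate

noncomputable section

/-- The analytic generator `xⱼ` in the free *-algebra `ℂ⟨x, x*⟩`,
modeled as `FreeAlgebra ℂ (Fin g ⊕ Fin g)`. -/
def xA (g : ℕ) (j : Fin g) : FreeAlgebra ℂ (Fin g ⊕ Fin g) :=
  FreeAlgebra.ι ℂ (Sum.inl j)

/-- The anti-analytic generator `xⱼ*`. -/
def xS (g : ℕ) (j : Fin g) : FreeAlgebra ℂ (Fin g ⊕ Fin g) :=
  FreeAlgebra.ι ℂ (Sum.inr j)

/-- The analytic word `x_{w₁} x_{w₂} ⋯ x_{w_n}` associated to a word `w` in the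
letters `x₁, …, x_g`. -/
def embWord (g : ℕ) (w : List (Fin g)) : FreeAlgebra ℂ (Fin g ⊕ Fin g) :=
  (w.map fun j => xA g j).prod

/-- The adjoint `x_{w_n}* ⋯ x_{w₁}*` of the analytic word associated to `w`. -/
def embWordStar (g : ℕ) (w : List (Fin g)) : FreeAlgebra ℂ (Fin g ⊕ Fin g) :=
  (w.reverse.map fun j => xS g j).prod

/-!
Fix `j` and evaluate at `xⱼ ↦ s`, `xⱼ* ↦ t`, all other letters `↦ 0`, in the commutative algebra
`ℂ[s,t]/(s², t²)`, then read off the coefficient of `st`. A word in the `x` alone lands in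
`{0, 1, s}` and a word in the `x*` alone in `{0, 1, t}`, so `q + q*`, `α` and `ℓ` contribute
nothing, while `ℓₖ* ℓₖ` contributes `|aₖⱼ|² + |bₖⱼ|²`. Hence `∑ₖ (|aₖⱼ|² + |bₖⱼ|²) = 0`.
-/

open DualNumber TrivSqZeroExt

theorem List.prod_eq_zero_or_one_or_eq {M₀ : Type*} [MonoidWithZero M₀] {u : M₀}
    (hu : u * u = 0) {L : List M₀} (hL : ∀ x ∈ L, x = u ∨ x = 0) :
    L.prod = 0 ∨ L.prod = 1 ∨ L.prod = u := by
  induction L with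
  | nil => simp
  | cons x L ih =>
    obtain ⟨hx, hL⟩ := List.forall_mem_cons.mp hL
    rcases hx with rfl | rfl
    · rcases ih hL with h | h | h <;> simp [h, hu]
    · simp

theorem Complex.sum_conj_mul_self_add_eq_zero_iff {ι : Type*} (s : Finset ι) (u v : ι → ℂ) :
    ∑ k ∈ s, (conj (u k) * u k + conj (v k) * v k) = 0 ↔ ∀ k ∈ s, u k = 0 ∧ v k = 0 := by
  simp_rw [← Complex.normSq_eq_conj_mul_self, ← Complex.ofReal_add, ← Complex.ofReal_sum,
    Complex.ofReal_eq_zero]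
  rw [Finset.sum_eq_zero_iff_of_nonneg
    fun k _ => add_nonneg (Complex.normSq_nonneg _) (Complex.normSq_nonneg _)]
  simp_rw [add_eq_zero_iff_of_nonneg (Complex.normSq_nonneg _) (Complex.normSq_nonneg _),
    Complex.normSq_eq_zero]

def affineForm (g : ℕ) (c : ℂ) (a b : Fin g → ℂ) : FreeAlgebra ℂ (Fin g ⊕ Fin g) :=
  algebraMap ℂ _ c + ∑ j, a j • xA g j + ∑ j, b j • xS g j

section MixedCoeff

variable (g : ℕ) (j : Fin g)

/-- `ℂ[ε][ε]` is `ℂ[s,t]/(s², t²)` with `s = inl ε` and `t = ε`. -/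
def evalDual : FreeAlgebra ℂ (Fin g ⊕ Fin g) →ₐ[ℂ] ℂ[ε][ε] :=
  FreeAlgebra.lift ℂ
    (Sum.elim (fun i => if i = j then inl ε else 0) (fun i => if i = j then ε else 0))

/-- The sum of the coefficients of `xⱼ xⱼ*` and `xⱼ* xⱼ`, read off as the coefficient of `st`. -/
def mixedCoeff : FreeAlgebra ℂ (Fin g ⊕ Fin g) →ₗ[ℂ] ℂ :=
  sndHom ℂ ℂ ∘ₗ (sndHom ℂ[ε] ℂ[ε]).restrictScalars ℂ ∘ₗ (evalDual g j).toLinearMap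

theorem mixedCoeff_apply (p : FreeAlgebra ℂ (Fin g ⊕ Fin g)) :
    mixedCoeff g j p = (evalDual g j p).snd.snd :=
  rfl

theorem evalDual_affineForm (c : ℂ) (a b : Fin g → ℂ) :
    evalDual g j (affineForm g c a b) = inl (inl c) + a j • inl ε + b j • ε := by
  simp [affineForm, evalDual, xA, xS, algebraMap_eq_inl']

theorem evalDual_embWord (w : List (Fin g)) :
    evalDual g j (embWord g w) = (w.map fun i => if i = j then inl ε else 0).prod := by
  rw [embWord, map_list_prod, List.map_map]
  congr 2
  funext i
  simp [evalDual, xA]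

theorem evalDual_embWordStar (w : List (Fin g)) :
    evalDual g j (embWordStar g w) = (w.reverse.map fun i => if i = j then ε else 0).prod := by
  rw [embWordStar, map_list_prod, List.map_map]
  congr 2
  funext i
  simp [evalDual, xS]

theorem mixedCoeff_algebraMap (r : ℂ) : mixedCoeff g j (algebraMap ℂ _ r) = 0 := by
  simp [mixedCoeff_apply, algebraMap_eq_inl']

theorem mixedCoeff_affineForm (c : ℂ) (a b : Fin g → ℂ) :
    mixedCoeff g j (affineForm g c a b) = 0 := by
  simp [mixedCoeff_apply, evalDual_affineForm]

theorem mixedCoeff_affineForm_mul_affineForm (c c' : ℂ) (a b a' b' : Fin g → ℂ) :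
    mixedCoeff g j (affineForm g c a b * affineForm g c' a' b') = a j * b' j + b j * a' j := by
  simp [mixedCoeff_apply, evalDual_affineForm]
  ring

theorem mixedCoeff_embWord (w : List (Fin g)) : mixedCoeff g j (embWord g w) = 0 := by
  rw [mixedCoeff_apply, evalDual_embWord]
  rcases List.prod_eq_zero_or_one_or_eq (u := (inl ε : ℂ[ε][ε])) (by simp [← inl_mul])
    (List.forall_mem_map.2 fun i _ => ite_eq_or_eq (i = j) _ _) with h | h | h <;> rw [h] <;> simp

theorem mixedCoeff_embWordStar (w : List (Fin g)) : mixedCoeff g j (embWordStar g w) = 0 := by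
  rw [mixedCoeff_apply, evalDual_embWordStar]
  rcases List.prod_eq_zero_or_one_or_eq (u := (ε : ℂ[ε][ε])) eps_mul_eps
    (List.forall_mem_map.2 fun i _ => ite_eq_or_eq (i = j) _ _) with h | h | h <;> rw [h] <;> simp

end MixedCoeff

theorem stmt_15 (g m : ℕ)
    -- the analytic polynomial q = ∑_w λ_w x^w and its adjoint q* = ∑_w conj(λ_w) (x^w)*
    (S : Finset (List (Fin g))) (lam : List (Fin g) → ℂ)
    -- the data of ℓ = ℓ₀ + ∑ⱼ eⱼ xⱼ + ∑ⱼ fⱼ xⱼ* and ℓₖ = cₖ + ∑ⱼ aₖⱼ xⱼ + ∑ⱼ bₖⱼ xⱼ*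
    (ℓ0 : ℂ) (e f : Fin g → ℂ) (c : Fin m → ℂ) (a b : Fin m → Fin g → ℂ) (α : ℂ)
    -- the identity q + q* = α + ℓ − ∑ₖ ℓₖ* ℓₖ in ℂ⟨x, x*⟩
    (hid :
      (∑ w ∈ S, lam w • embWord g w) + (∑ w ∈ S, conj (lam w) • embWordStar g w) =
      algebraMap ℂ (FreeAlgebra ℂ (Fin g ⊕ Fin g)) α
        + (algebraMap ℂ _ ℓ0 + ∑ j, e j • xA g j + ∑ j, f j • xS g j)
        - ∑ k, (algebraMap ℂ _ (conj (c k)) + ∑ j, conj (a k j) • xS g j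
                  + ∑ j, conj (b k j) • xA g j)
              * (algebraMap ℂ _ (c k) + ∑ j, a k j • xA g j + ∑ j, b k j • xS g j)) :
    ∀ (k : Fin m) (j : Fin g), a k j = 0 ∧ b k j = 0 := by
  intro k j
  have hstar : ∀ k, algebraMap ℂ (FreeAlgebra ℂ (Fin g ⊕ Fin g)) (conj (c k))
      + ∑ j, conj (a k j) • xS g j + ∑ j, conj (b k j) • xA g j
      = affineForm g (conj (c k)) (fun j => conj (b k j)) (fun j => conj (a k j)) :=
    fun k => add_right_comm _ _ _
  simp only [hstar, ← affineForm.eq_1] at hid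
  have h := congrArg (mixedCoeff g j) hid
  simp only [map_add, map_sub, map_sum, map_smul, mixedCoeff_embWord, mixedCoeff_embWordStar,
    mixedCoeff_algebraMap, mixedCoeff_affineForm, mixedCoeff_affineForm_mul_affineForm,
    smul_zero, Finset.sum_const_zero, add_zero, zero_sub, zero_eq_neg] at h
  obtain ⟨hb, ha⟩ := (Complex.sum_conj_mul_self_add_eq_zero_iff _ _ _).mp h k (Finset.mem_univ k)
  exact ⟨ha, hb⟩

end
end
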